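/- arXiv:2306.14858 — 3 statements merged into one kernel-verified Lean document; each statement's English description precedes it below -/
import Mathlib

section
/- For every α with 0 < α < 1, there exists a decision instance for which no decision sequence satisfies ℓ/α-Agreement PJR. -/
attribute [local instance] Classical.propDecidable

/-- A decision instance with `n ≥ 1` voters (indexed by `Fin n`), time horizon `T ≥ 1`
(rounds indexed by `Fin T`), alternatives drawn from a type `γ`, a finite nonempty set
`C j` of alternatives available in round `j`, and approval sets `A i j ⊆ C j`. -/
structure Inst (n T : ℕ) (γ : Type) where
  hn : 1 ≤ n
  hT : 1 ≤ T
  C : Fin T → Finset γ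
  hC : ∀ j, (C j).Nonempty
  A : Fin n → Fin T → Finset γ
  hA : ∀ i j, A i j ⊆ C j

namespace Inst

variable {n T : ℕ} {γ : Type}

/-- `d` is a decision sequence: one alternative of `C j` for each round `j`. -/
def ValidSeq (I : Inst n T γ) (d : Fin T → γ) : Prop := ∀ j, d j ∈ I.C j

/-- The utility of voter `i`: the number of rounds whose decision `i` approves. -/
noncomputable def util (I : Inst n T γ) (d : Fin T → γ) (i : Fin n) : ℕ :=
  Nat.card {j : Fin T // d j ∈ I.A i j}

/-- The group `S` agrees in round `j`: some alternative is approved by all members of `S`. -/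
def agrees (I : Inst n T γ) (S : Finset (Fin n)) (j : Fin T) : Prop :=
  ∃ c, ∀ i ∈ S, c ∈ I.A i j

/-- The number of rounds in which the group `S` agrees. -/
noncomputable def agreeCount (I : Inst n T γ) (S : Finset (Fin n)) : ℕ :=
  Nat.card {j : Fin T // I.agrees S j}

/-- The number of rounds whose decision is approved by at least one member of `S`. -/
noncomputable def happyCount (I : Inst n T γ) (d : Fin T → γ) (S : Finset (Fin n)) : ℕ :=
  Nat.card {j : Fin T // ∃ i ∈ S, d j ∈ I.A i j}

/-- For `0 < a < 1`, `D` satisfies ℓ/`a`-Agreement PJR: for every `ℓ ≥ 1` and every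
nonempty group `S` that agrees in at least `ℓ/a` rounds with `|S| ≥ ℓ·n/T`, there are at
least `ℓ` rounds whose decision is approved by some member of `S`. -/
def ellOverAlphaAgreementPJR (I : Inst n T γ) (a : ℝ) (d : Fin T → γ) : Prop :=
  ∀ ℓ : ℕ, 1 ≤ ℓ →
    ∀ S : Finset (Fin n), S.Nonempty → (ℓ : ℝ) / a ≤ (I.agreeCount S : ℝ) →
      (ℓ : ℝ) * n / T ≤ S.card → ℓ ≤ I.happyCount d S

end Inst

/-- for every `0 < α < 1` there is a decision instance on which no decision
sequence satisfies ℓ/α-Agreement PJR. -/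
theorem ell_over_alpha_agreement_PJR_infeasible (a : ℝ) (ha₀ : 0 < a) (ha₁ : a < 1) :
    ∃ (n T : ℕ) (γ : Type) (I : Inst n T γ),
      ∀ d : Fin T → γ, I.ValidSeq d → ¬ I.ellOverAlphaAgreementPJR a d := by
  classical
  set k : ℕ := ⌈1 / a⌉₊ with hk
  have hk1 : (1 : ℝ) / a ≤ (k : ℝ) := Nat.le_ceil _
  set I : Inst (k + 1) (k + 1) (Fin (k + 1)) :=
    { hn := Nat.le_add_left 1 k
      hT := Nat.le_add_left 1 k
      C := fun _ => Finset.univ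
      hC := fun _ => Finset.univ_nonempty
      A := fun i j => if (j : ℕ) < k then {i} else ∅
      hA := fun i j => Finset.subset_univ _ } with hI
  refine ⟨k + 1, k + 1, Fin (k + 1), I, ?_⟩
  intro d _ hPJR
  -- For each voter i, there is a round j < k with d j = i.
  have key : ∀ i : Fin (k + 1), ∃ j : Fin (k + 1), (j : ℕ) < k ∧ d j = i := by
    intro i
    have h1 := hPJR 1 le_rfl {i} (Finset.singleton_nonempty i) ?_ ?_
    · -- happyCount ≥ 1 means the subtype is nonempty
      by_contra hno
      push_neg at hno
      have hempty : IsEmpty {j : Fin (k + 1) //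
          ∃ i' ∈ ({i} : Finset (Fin (k + 1))), d j ∈ I.A i' j} := by
        constructor
        rintro ⟨j, i', hi', hdj⟩
        simp only [Finset.mem_singleton] at hi'
        subst hi'
        simp only [hI] at hdj
        by_cases hjk : (j : ℕ) < k
        · rw [if_pos hjk, Finset.mem_singleton] at hdj
          exact hno j hjk hdj
        · rw [if_neg hjk] at hdj
          exact absurd hdj (Finset.notMem_empty _)
      have hz : I.happyCount d {i} = 0 := by
        unfold Inst.happyCount
        exact Nat.card_of_isEmpty
      omega
    · -- agreeCount ≥ k
      have hle : k ≤ I.agreeCount {i} := by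
        unfold Inst.agreeCount
        rw [Nat.card_eq_fintype_card]
        have hcard : Fintype.card (Fin k) ≤
            Fintype.card {j : Fin (k + 1) // I.agrees {i} j} := by
          apply Fintype.card_le_of_injective
            (fun j => ⟨Fin.castSucc j, ⟨i, by
              intro i' hi'
              simp only [Finset.mem_singleton] at hi'
              subst hi'
              simp only [hI]
              rw [if_pos (by simpa using j.isLt)]
              exact Finset.mem_singleton_self _⟩⟩)
          intro j j' hjj'
          have := congrArg (fun x => (x : {j : Fin (k+1) // I.agrees {i} j}).1) hjj'
          simpa [Fin.castSucc_inj] using this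
        simpa using hcard
      calc ((1 : ℕ) : ℝ) / a ≤ (k : ℝ) := by rw [Nat.cast_one]; exact hk1
        _ ≤ _ := by exact_mod_cast hle
    · -- size condition: 1 * (k+1) / (k+1) ≤ 1
      have hpos : (0 : ℝ) < (k : ℝ) + 1 := by positivity
      simp only [Nat.cast_one, one_mul, Finset.card_singleton, Nat.cast_add, Nat.cast_one]
      rw [div_le_one hpos]
  -- pigeonhole: injective map Fin (k+1) → Fin k
  choose f hf hfd using key
  have hinj : Function.Injective (fun i => (⟨(f i : ℕ), hf i⟩ : Fin k)) := by
    intro i i' h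
    simp only [Fin.mk.injEq] at h
    have hfe : f i = f i' := Fin.ext h
    rw [← hfd i, ← hfd i', hfe]
  have := Fintype.card_le_of_injective _ hinj
  simp only [Fintype.card_fin] at this
  omega
end

section
/- There exists a decision instance (one can take n = 6 voters and T = 4 rounds) and a decision sequence D of length T that satisfies perpetual priceability but fails JR (and hence fails PJR). -/
attribute [local instance] Classical.propDecidable

namespace Inst

variable {n T : ℕ} {γ : Type}

/-- A price system `(B, p)` supporting the length-`k` prefix `(d_1,…,d_k)` of the
decision sequence `d`: each voter has budget `B ≥ 0`; payments lie in `[0,1]`;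
(P1) voters only pay for approved alternatives; (P2) no voter spends more than `B`;
(P3) each decided round's decision receives total payment `1`;
(P4) non-chosen alternatives receive no payments. -/
def PriceSystem (I : Inst n T γ) (k : ℕ) (d : Fin T → γ) (B : ℝ)
    (p : Fin T → Fin n → γ → ℝ) : Prop :=
  0 ≤ B ∧
  (∀ j : Fin T, (j : ℕ) < k → ∀ i c, 0 ≤ p j i c ∧ p j i c ≤ 1) ∧
  (∀ j : Fin T, (j : ℕ) < k → ∀ i, ∀ c, c ∉ I.A i j → p j i c = 0) ∧
  (∀ i, ∑ j ∈ Finset.univ.filter (fun j : Fin T => (j : ℕ) < k),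
      ∑ c ∈ I.C j, p j i c ≤ B) ∧
  (∀ j : Fin T, (j : ℕ) < k → ∑ i, p j i (d j) = 1) ∧
  (∀ j : Fin T, (j : ℕ) < k → ∀ c ∈ I.C j, c ≠ d j → ∑ i, p j i c = 0)

/-- A minimal price system supporting the length-`k` prefix of `d`: for `k = 0` the
budget is `0`; for `k ≥ 1`, `(B, p)` is a price system supporting the prefix, (P5) there
is a minimal price system `(B*, p*)` supporting the length-`(k−1)` prefix, and (P6) there
are no `B'` with `B* ≤ B' < B`, alternative `d'_k ∈ C_k`, and payment function `p'_k`
such that `(B', p)` with round `k` replaced by `(d'_k, p'_k)` is a price system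
supporting `(d_1,…,d_{k−1},d'_k)`. -/
def MinimalPS (I : Inst n T γ) (d : Fin T → γ) :
    (k : ℕ) → k ≤ T → ℝ → (Fin T → Fin n → γ → ℝ) → Prop
  | 0, _, B, p => I.PriceSystem 0 d B p ∧ B = 0
  | k + 1, hk, B, p =>
      I.PriceSystem (k + 1) d B p ∧
      ∃ (Bs : ℝ) (ps : Fin T → Fin n → γ → ℝ),
        I.MinimalPS d k (Nat.le_of_succ_le hk) Bs ps ∧
        ¬ ∃ (B' : ℝ) (dk : γ) (pk : Fin n → γ → ℝ),
            Bs ≤ B' ∧ B' < B ∧ dk ∈ I.C ⟨k, hk⟩ ∧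
            I.PriceSystem (k + 1) (Function.update d ⟨k, hk⟩ dk) B'
              (Function.update p ⟨k, hk⟩ pk)

/-- A decision sequence of length `T` satisfies perpetual priceability if it is supported
by some minimal price system. -/
def PerpetualPriceable (I : Inst n T γ) (d : Fin T → γ) : Prop :=
  ∃ (B : ℝ) (p : Fin T → Fin n → γ → ℝ), I.MinimalPS d T le_rfl B p

/-- `D` satisfies JR: for every `k ∈ {1,…,T}` and every nonempty group `S` that agrees in
at least `k` rounds with `|S| ≥ n/k`, some voter `i ∈ S` has `U^i_D ≥ 1`. -/
def JR (I : Inst n T γ) (d : Fin T → γ) : Prop :=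
  ∀ k : ℕ, 1 ≤ k → k ≤ T →
    ∀ S : Finset (Fin n), S.Nonempty → k ≤ I.agreeCount S →
      (n : ℝ) / k ≤ S.card → ∃ i ∈ S, 1 ≤ I.util d i

end Inst

namespace PJRX

def myC : Fin 4 → Finset ℕ := ![{0}, {1}, {2, 4}, {3, 4}]

def myA : Fin 6 → Fin 4 → Finset ℕ :=
  ![![{0}, {1}, ∅, ∅],
    ![∅, ∅, {2}, ∅],
    ![∅, ∅, ∅, {3}],
    ![∅, ∅, {4}, {4}],
    ![∅, ∅, {4}, {4}],
    ![∅, ∅, {4}, {4}]]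

def myI : Inst 6 4 ℕ where
  hn := by norm_num
  hT := by norm_num
  C := myC
  hC := by decide
  A := myA
  hA := by decide

def myd : Fin 4 → ℕ := ![0, 1, 2, 3]

noncomputable def pp : Fin 4 → Fin 6 → ℕ → ℝ := fun j i c =>
  if ((j : ℕ) = 0 ∧ (i : ℕ) = 0 ∧ c = 0) ∨ ((j : ℕ) = 1 ∧ (i : ℕ) = 0 ∧ c = 1) ∨
     ((j : ℕ) = 2 ∧ (i : ℕ) = 1 ∧ c = 2) ∨ ((j : ℕ) = 3 ∧ (i : ℕ) = 2 ∧ c = 3) then 1 else 0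

lemma valid : myI.ValidSeq myd := by
  intro j
  fin_cases j <;> decide

lemma fv0 : ((0 : Fin 4) : ℕ) = 0 := rfl
lemma fv1 : ((1 : Fin 4) : ℕ) = 1 := rfl
lemma fv2 : ((2 : Fin 4) : ℕ) = 2 := rfl
lemma fv3 : ((3 : Fin 4) : ℕ) = 3 := rfl

lemma g0 : ((0 : Fin 6) : ℕ) = 0 := rfl
lemma g1 : ((1 : Fin 6) : ℕ) = 1 := rfl
lemma g2 : ((2 : Fin 6) : ℕ) = 2 := rfl
lemma g3 : ((3 : Fin 6) : ℕ) = 3 := rfl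
lemma g4 : ((4 : Fin 6) : ℕ) = 4 := rfl
lemma g5 : ((5 : Fin 6) : ℕ) = 5 := rfl

lemma fsum (k : ℕ) (f : Fin 4 → ℝ) :
    ∑ j ∈ Finset.univ.filter (fun j : Fin 4 => (j : ℕ) < k), f j =
      ∑ j : Fin 4, if (j : ℕ) < k then f j else 0 :=
  Finset.sum_filter _ _

lemma ps_gen (k : ℕ) (B : ℝ) (hB : 0 ≤ B)
    (h : ∀ i, ∑ j ∈ Finset.univ.filter (fun j : Fin 4 => (j : ℕ) < k),
      ∑ c ∈ myI.C j, pp j i c ≤ B) :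
    myI.PriceSystem k myd B pp := by
  refine ⟨hB, ?_, ?_, h, ?_, ?_⟩
  · intro j _ i c
    unfold pp
    split <;> norm_num
  · intro j _ i c hc
    unfold pp
    split
    · rename_i hcase
      exfalso
      rcases hcase with ⟨h1, h2, h3⟩ | ⟨h1, h2, h3⟩ | ⟨h1, h2, h3⟩ | ⟨h1, h2, h3⟩ <;>
        subst h3 <;>
        [(have hj : j = 0 := Fin.eq_of_val_eq h1; have hi : i = 0 := Fin.eq_of_val_eq h2);
         (have hj : j = 1 := Fin.eq_of_val_eq h1; have hi : i = 0 := Fin.eq_of_val_eq h2);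
         (have hj : j = 2 := Fin.eq_of_val_eq h1; have hi : i = 1 := Fin.eq_of_val_eq h2);
         (have hj : j = 3 := Fin.eq_of_val_eq h1; have hi : i = 2 := Fin.eq_of_val_eq h2)] <;>
        subst hj <;> subst hi <;> exact hc (by decide)
    · rfl
  · intro j hj
    fin_cases j <;> rw [Fin.sum_univ_six] <;> norm_num [pp, myd, g0, g1, g2, g3, g4, g5]
  · intro j hj c hcC hcne
    fin_cases j <;>
      simp_all [myI, myC, Fin.sum_univ_six, pp, myd]

lemma inner0 (i : Fin 6) : ∑ c ∈ myI.C 0, pp 0 i c = if (i : ℕ) = 0 then 1 else 0 := by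
  show ∑ c ∈ ({0} : Finset ℕ), pp 0 i c = _
  rw [Finset.sum_singleton]
  unfold pp
  fin_cases i <;> norm_num [g0, g1, g2, g3, g4, g5, fv0, fv1, fv2, fv3]

lemma inner1 (i : Fin 6) : ∑ c ∈ myI.C 1, pp 1 i c = if (i : ℕ) = 0 then 1 else 0 := by
  show ∑ c ∈ ({1} : Finset ℕ), pp 1 i c = _
  rw [Finset.sum_singleton]
  unfold pp
  fin_cases i <;> norm_num [g0, g1, g2, g3, g4, g5, fv0, fv1, fv2, fv3]

lemma inner2 (i : Fin 6) : ∑ c ∈ myI.C 2, pp 2 i c = if (i : ℕ) = 1 then 1 else 0 := by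
  show ∑ c ∈ ({2, 4} : Finset ℕ), pp 2 i c = _
  rw [Finset.sum_insert (by decide), Finset.sum_singleton]
  unfold pp
  fin_cases i <;> norm_num [g0, g1, g2, g3, g4, g5, fv0, fv1, fv2, fv3]

lemma inner3 (i : Fin 6) : ∑ c ∈ myI.C 3, pp 3 i c = if (i : ℕ) = 2 then 1 else 0 := by
  show ∑ c ∈ ({3, 4} : Finset ℕ), pp 3 i c = _
  rw [Finset.sum_insert (by decide), Finset.sum_singleton]
  unfold pp
  fin_cases i <;> norm_num [g0, g1, g2, g3, g4, g5, fv0, fv1, fv2, fv3]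

lemma ps0 : myI.PriceSystem 0 myd 0 pp := by
  apply ps_gen _ _ le_rfl
  intro i
  rw [fsum, Fin.sum_univ_four]
  simp only [fv0, fv1, fv2, fv3]
  norm_num

lemma ps1 : myI.PriceSystem 1 myd 1 pp := by
  apply ps_gen _ _ (by norm_num)
  intro i
  rw [fsum, Fin.sum_univ_four]
  simp only [fv0, fv1, fv2, fv3, inner0]
  fin_cases i <;> norm_num

lemma ps2 : myI.PriceSystem 2 myd 2 pp := by
  apply ps_gen _ _ (by norm_num)
  intro i
  rw [fsum, Fin.sum_univ_four]
  simp only [fv0, fv1, fv2, fv3, inner0, inner1]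
  fin_cases i <;> norm_num

lemma ps3 : myI.PriceSystem 3 myd 2 pp := by
  apply ps_gen _ _ (by norm_num)
  intro i
  rw [fsum, Fin.sum_univ_four]
  simp only [fv0, fv1, fv2, fv3, inner0, inner1, inner2]
  fin_cases i <;> norm_num

lemma ps4 : myI.PriceSystem 4 myd 2 pp := by
  apply ps_gen _ _ (by norm_num)
  intro i
  rw [fsum, Fin.sum_univ_four]
  simp only [fv0, fv1, fv2, fv3, inner0, inner1, inner2, inner3]
  fin_cases i <;> norm_num

lemma min0 : myI.MinimalPS myd 0 (by norm_num) 0 pp := ⟨ps0, rfl⟩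

lemma min1 : myI.MinimalPS myd 1 (by norm_num) 1 pp := by
  refine ⟨ps1, 0, pp, min0, ?_⟩
  rintro ⟨B', dk, pk, hB0, hB1, hdk, hPS⟩
  obtain ⟨-, -, hP1, hP2, hP3, -⟩ := hPS
  have hdk0 : dk = 0 := by simpa [myI, myC] using hdk
  subst hdk0
  have h3 := hP3 0 (by norm_num)
  simp only [Function.update, Fin.ext_iff, fv0, fv1, fv2, fv3] at h3
  norm_num [Fin.sum_univ_six, myd] at h3
  have hzero : ∀ i : Fin 6, i ≠ 0 → pk i 0 = 0 := by
    intro i hi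
    have h1 := hP1 0 (by norm_num) i 0 ?_
    · simpa [Function.update, Fin.ext_iff, fv0] using h1
    · fin_cases i <;> first | (exact absurd rfl hi) | decide
  rw [hzero 1 (by decide), hzero 2 (by decide), hzero 3 (by decide),
    hzero 4 (by decide), hzero 5 (by decide)] at h3
  have h2 := hP2 0
  rw [fsum, Fin.sum_univ_four] at h2
  simp only [Function.update, Fin.ext_iff, fv0, fv1, fv2, fv3] at h2
  norm_num at h2
  have e : ∑ c ∈ myI.C 0, pk 0 c = pk 0 0 := by
    show ∑ c ∈ ({0} : Finset ℕ), pk 0 c = _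
    rw [Finset.sum_singleton]
  rw [e] at h2
  linarith

lemma min2 : myI.MinimalPS myd 2 (by norm_num) 2 pp := by
  refine ⟨ps2, 1, pp, min1, ?_⟩
  rintro ⟨B', dk, pk, hB0, hB1, hdk, hPS⟩
  obtain ⟨-, -, hP1, hP2, hP3, -⟩ := hPS
  have hdk1 : dk = 1 := by simpa [myI, myC] using hdk
  subst hdk1
  have h3 := hP3 1 (by norm_num)
  simp only [Function.update, Fin.ext_iff, fv0, fv1, fv2, fv3] at h3
  norm_num [Fin.sum_univ_six, myd] at h3
  have hzero : ∀ i : Fin 6, i ≠ 0 → pk i 1 = 0 := by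
    intro i hi
    have h1 := hP1 1 (by norm_num) i 1 ?_
    · simpa [Function.update, Fin.ext_iff, fv1] using h1
    · fin_cases i <;> first | (exact absurd rfl hi) | decide
  rw [hzero 1 (by decide), hzero 2 (by decide), hzero 3 (by decide),
    hzero 4 (by decide), hzero 5 (by decide)] at h3
  have h2 := hP2 0
  rw [fsum, Fin.sum_univ_four] at h2
  simp only [Function.update, Fin.ext_iff, fv0, fv1, fv2, fv3] at h2
  norm_num at h2
  have e0 : ∑ c ∈ myI.C 0, pp 0 0 c = 1 := by rw [inner0]; norm_num
  have e1 : ∑ c ∈ myI.C 1, pk 0 c = pk 0 1 := by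
    show ∑ c ∈ ({1} : Finset ℕ), pk 0 c = _
    rw [Finset.sum_singleton]
  rw [e0, e1] at h2
  linarith

lemma min3 : myI.MinimalPS myd 3 (by norm_num) 2 pp := by
  refine ⟨ps3, 2, pp, min2, ?_⟩
  rintro ⟨B', dk, pk, hB0, hB1, -, -⟩
  linarith

lemma min4 : myI.MinimalPS myd 4 le_rfl 2 pp := by
  refine ⟨ps4, 2, pp, min3, ?_⟩
  rintro ⟨B', dk, pk, hB0, hB1, -, -⟩
  linarith

lemma agrees2 : myI.agrees {3, 4, 5} 2 := ⟨4, by decide⟩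
lemma agrees3 : myI.agrees {3, 4, 5} 3 := ⟨4, by decide⟩

lemma notJR : ¬ myI.JR myd := by
  intro hJR
  have hagree : 2 ≤ myI.agreeCount {3, 4, 5} := by
    have hnt : Nontrivial {j : Fin 4 // myI.agrees {3, 4, 5} j} := by
      refine ⟨⟨2, agrees2⟩, ⟨3, agrees3⟩, ?_⟩
      intro h
      exact absurd (congrArg Subtype.val h) (by decide)
    have h1 := Finite.one_lt_card_iff_nontrivial.mpr hnt
    unfold Inst.agreeCount
    omega
  obtain ⟨i, hi, hu⟩ := hJR 2 (by norm_num) (by norm_num) {3, 4, 5}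
    ⟨3, by decide⟩ hagree (by
      have hc3 : ({3, 4, 5} : Finset (Fin 6)).card = 3 := by decide
      rw [hc3]; norm_num)
  have hempty : IsEmpty {j : Fin 4 // myd j ∈ myI.A i j} := by
    constructor
    rintro ⟨j, hj⟩
    fin_cases i <;> simp_all [Finset.mem_insert] <;> fin_cases j <;> revert hj <;> decide
  rw [Inst.util, Nat.card_of_isEmpty] at hu
  omega

end PJRX

/-- there is a decision instance (with `n = 6` voters and `T = 4` rounds)
and a decision sequence of length `T` that satisfies perpetual priceability but fails JR. -/
theorem priceability_does_not_imply_JR :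
    ∃ (γ : Type) (I : Inst 6 4 γ) (d : Fin 4 → γ),
      I.ValidSeq d ∧ I.PerpetualPriceable d ∧ ¬ I.JR d := by
  exact ⟨ℕ, PJRX.myI, PJRX.myd, PJRX.valid, ⟨2, PJRX.pp, PJRX.min4⟩, PJRX.notJR⟩
end

section
/- There exists a decision instance (one can take n = 7 voters and T = 7 rounds) on which some decision sequence D is simultaneously the output of an execution of Sequential Phragmén and an MES-consistent decision sequence produced by an execution of MES that decides all rounds, and D is Pareto-dominated by another decision sequence; hence neither Sequential Phragmén nor MES always produces Pareto efficient outcomes. -/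
attribute [local instance] Classical.propDecidable

namespace Inst

variable {n T : ℕ} {γ : Type}

/-- An execution of Sequential Phragmén: loads `x j` before round `j` (with `x 0 ≡ 0`,
all loads nonnegative), and in each round `j`, if some available alternative is approved
by at least one voter, the decision `d j` is approved by a nonempty coalition `S` whose
load value `(1 + Σ_{i ∈ S} x_{j-1}(i))/|S|` is minimal among all nonempty coalitions
commonly approving any available alternative; the members of `S` get that value as their
new load and all other loads are unchanged.  If no available alternative is approved by
anyone, the decision is arbitrary and loads are unchanged. -/
def PhragmenExec (I : Inst n T γ) (x : Fin (T + 1) → Fin n → ℝ) (d : Fin T → γ) : Prop :=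
  (∀ i, x 0 i = 0) ∧ (∀ j i, 0 ≤ x j i) ∧
  ∀ j : Fin T,
    d j ∈ I.C j ∧
    ((∃ c ∈ I.C j, ∃ i, c ∈ I.A i j) →
      ∃ S : Finset (Fin n), S.Nonempty ∧ (∀ i ∈ S, d j ∈ I.A i j) ∧
        (∀ c ∈ I.C j, ∀ S' : Finset (Fin n), S'.Nonempty → (∀ i ∈ S', c ∈ I.A i j) →
          (1 + ∑ i ∈ S, x j.castSucc i) / (S.card : ℝ) ≤
            (1 + ∑ i ∈ S', x j.castSucc i) / (S'.card : ℝ)) ∧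
        (∀ i ∈ S, x j.succ i = (1 + ∑ i' ∈ S, x j.castSucc i') / (S.card : ℝ)) ∧
        (∀ i ∉ S, x j.succ i = x j.castSucc i)) ∧
    ((¬ ∃ c ∈ I.C j, ∃ i, c ∈ I.A i j) → ∀ i, x j.succ i = x j.castSucc i)


/-- With price `p = n/T`, an alternative `c` is `ρ`-affordable in round `j` with respect
to budgets `b` if its approvers can pay `p`, with no one paying more than `ρ`:
`Σ_{i : c ∈ A^i_j} min(b(i), ρ) ≥ p`. -/
def affordable (I : Inst n T γ) (b : Fin n → ℝ) (j : Fin T) (c : γ) (ρ : ℝ) : Prop :=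
  (n : ℝ) / T ≤ ∑ i ∈ Finset.univ.filter (fun i => c ∈ I.A i j), min (b i) ρ

/-- An execution of the Method of Equal Shares deciding the first `t ≤ T` rounds:
budgets start at `1`; in each decided round `j < t` the decision `d j ∈ C j` is
`ρ`-affordable for the least `ρ ≥ 0` at which some available alternative is affordable,
approvers pay (their budget is decreased by `ρ`, floored at `0`) and other budgets are
unchanged; and if `t < T` then no alternative of round `t` is `ρ`-affordable for any
`ρ ≥ 0` (MES terminates prematurely). -/
def MESExec (I : Inst n T γ) (t : ℕ) (b : ℕ → Fin n → ℝ) (d : Fin T → γ) : Prop :=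
  t ≤ T ∧ (∀ i, b 0 i = 1) ∧ (∀ j i, 0 ≤ b j i) ∧
  (∀ j : Fin T, (j : ℕ) < t →
    d j ∈ I.C j ∧
    ∃ ρ : ℝ, 0 ≤ ρ ∧ I.affordable (b j) j (d j) ρ ∧
      (∀ ρ' : ℝ, 0 ≤ ρ' → (∃ c ∈ I.C j, I.affordable (b j) j c ρ') → ρ ≤ ρ') ∧
      (∀ i, d j ∈ I.A i j → b ((j : ℕ) + 1) i = max 0 (b (j : ℕ) i - ρ)) ∧
      (∀ i, d j ∉ I.A i j → b ((j : ℕ) + 1) i = b (j : ℕ) i)) ∧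
  (∀ h : t < T, ∀ c ∈ I.C ⟨t, h⟩, ∀ ρ : ℝ, 0 ≤ ρ → ¬ I.affordable (b t) ⟨t, h⟩ c ρ)

/-- A decision sequence is MES-consistent if its decisions in the rounds decided by some
MES execution coincide with those of the execution (decisions in later rounds being
arbitrary alternatives of the respective rounds). -/
def MESConsistent (I : Inst n T γ) (d : Fin T → γ) : Prop :=
  I.ValidSeq d ∧ ∃ (t : ℕ) (b : ℕ → Fin n → ℝ), I.MESExec t b d


end Inst

namespace NPE
open Finset

def S6 : Finset (Fin 7) := Finset.univ.erase 6

@[simp] lemma val6 : ((6:Fin 7):ℕ) = 6 := rfl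
@[simp] lemma val0 : ((0:Fin 7):ℕ) = 0 := rfl
@[simp] lemma val1 : ((1:Fin 7):ℕ) = 1 := rfl
@[simp] lemma val2 : ((2:Fin 7):ℕ) = 2 := rfl
@[simp] lemma val3 : ((3:Fin 7):ℕ) = 3 := rfl
@[simp] lemma val4 : ((4:Fin 7):ℕ) = 4 := rfl
@[simp] lemma val5 : ((5:Fin 7):ℕ) = 5 := rfl

lemma mem_S6 {i : Fin 7} : i ∈ S6 ↔ (i:ℕ) ≠ 6 := by
  simp [S6, Fin.ext_iff]

lemma card_S6 : S6.card = 6 := by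
  rw [S6, Finset.card_erase_of_mem (Finset.mem_univ _)]; simp

lemma keyA (l : ℝ) (h0 : 0 ≤ l) (k : ℕ) (hk1 : 1 ≤ k) (hk : k ≤ 6) :
    (1 + 6*l)/6 ≤ (1 + (k:ℝ)*l)/k := by
  rw [div_le_div_iff₀ (by norm_num) (by positivity)]
  have : (k:ℝ) ≤ 6 := by exact_mod_cast hk
  nlinarith

lemma keyB (l : ℝ) (h0 : 0 ≤ l) (h1 : l ≤ 5/6) (k : ℕ) (hk1 : 1 ≤ k) (hk : k ≤ 7) :
    (1 + 6*l)/6 ≤ (1 + (((k:ℝ)-1)*l + 1))/k := by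
  have hkpos : (0:ℝ) < k := by exact_mod_cast hk1
  rw [div_le_div_iff₀ (by norm_num) hkpos]
  have : (k:ℝ) ≤ 7 := by exact_mod_cast hk
  nlinarith

lemma sum_if (l : ℝ) (S' : Finset (Fin 7)) :
    ∑ i ∈ S', (if (i:ℕ) = 6 then (1:ℝ) else l) =
      if (6:Fin 7) ∈ S' then ((S'.card:ℝ)-1)*l + 1 else (S'.card:ℝ)*l := by
  by_cases h : (6:Fin 7) ∈ S'
  · rw [if_pos h, ← Finset.sum_erase_add _ _ h]
    have h1 : ∑ i ∈ S'.erase 6, (if (i:ℕ) = 6 then (1:ℝ) else l) =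
        ∑ i ∈ S'.erase 6, l := by
      apply Finset.sum_congr rfl
      intro i hi
      rw [if_neg]
      intro hv
      exact (Finset.mem_erase.mp hi).1 (Fin.ext (by simpa using hv))
    rw [h1, Finset.sum_const, Finset.card_erase_of_mem h, if_pos val6]
    have : (1:ℕ) ≤ S'.card := Finset.card_pos.mpr ⟨6, h⟩
    rw [nsmul_eq_mul, Nat.cast_sub this]
    push_cast
    ring
  · rw [if_neg h]
    have h1 : ∑ i ∈ S', (if (i:ℕ) = 6 then (1:ℝ) else l) = ∑ i ∈ S', l := by
      apply Finset.sum_congr rfl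
      intro i hi
      rw [if_neg]
      intro hv
      exact h (by rwa [show i = 6 from Fin.ext (by simpa using hv)] at hi)
    rw [h1, Finset.sum_const, nsmul_eq_mul]

lemma phragMin (l : ℝ) (h0 : 0 ≤ l) (h1 : l ≤ 5/6) (S' : Finset (Fin 7)) (hS' : S'.Nonempty) :
    (1 + 6*l)/6 ≤ (1 + ∑ i ∈ S', (if (i:ℕ) = 6 then (1:ℝ) else l)) / S'.card := by
  rw [sum_if]
  have hk1 : 1 ≤ S'.card := Finset.card_pos.mpr hS'
  by_cases h : (6:Fin 7) ∈ S'
  · rw [if_pos h]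
    exact keyB l h0 h1 _ hk1 (Finset.card_le_univ S' |>.trans (by simp))
  · rw [if_neg h]
    have hk : S'.card ≤ 6 := by
      have : S' ⊆ S6 := fun i hi => mem_S6.mpr (by
        intro hv
        exact h (by rwa [show i = 6 from Fin.ext (by simpa using hv)] at hi))
      simpa [card_S6] using Finset.card_le_card this
    exact keyA l h0 _ hk1 hk

lemma sumS6 (l : ℝ) : ∑ i ∈ S6, (if (i:ℕ) = 6 then (1:ℝ) else l) = 6*l := by
  rw [sum_if]
  rw [if_neg (by simp [mem_S6]), card_S6]
  norm_num


def Cv : Fin 7 → Finset (Fin 4) := fun j =>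
  if (j:ℕ) = 0 then {0} else if (j:ℕ) = 1 then {1, 2} else {3}

def Av : Fin 7 → Fin 7 → Finset (Fin 4) := fun i j =>
  if (j:ℕ) = 0 then (if (i:ℕ) = 6 then {0} else ∅)
  else if (j:ℕ) = 1 then (if (i:ℕ) = 6 then {2} else {1, 2})
  else {3}

def dv : Fin 7 → Fin 4 := fun j => if (j:ℕ) = 0 then 0 else if (j:ℕ) = 1 then 1 else 3
def dv' : Fin 7 → Fin 4 := fun j => if (j:ℕ) = 0 then 0 else if (j:ℕ) = 1 then 2 else 3

noncomputable def xv : Fin 8 → Fin 7 → ℝ := fun j i =>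
  if (j:ℕ) = 0 then 0 else if (i:ℕ) = 6 then 1 else ((j:ℕ) - 1 : ℝ)/6

noncomputable def bv : ℕ → Fin 7 → ℝ := fun j i =>
  if j = 0 then 1 else if (i:ℕ) = 6 then 0 else max 0 ((7 - (j:ℝ))/6)

def I7 : Inst 7 7 (Fin 4) where
  hn := by norm_num
  hT := by norm_num
  C := Cv
  hC := by
    intro j
    unfold Cv
    split_ifs <;> simp
  A := Av
  hA := by
    intro i j
    unfold Av Cv
    split_ifs <;> simp [Finset.insert_subset_iff]

lemma valid_dv : I7.ValidSeq dv := by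
  intro j
  show dv j ∈ Cv j
  unfold dv Cv
  split_ifs <;> simp

lemma valid_dv' : I7.ValidSeq dv' := by
  intro j
  show dv' j ∈ Cv j
  unfold dv' Cv
  split_ifs <;> simp


@[simp] lemma I7_C : I7.C = Cv := rfl
@[simp] lemma I7_A : I7.A = Av := rfl

lemma xv_castSucc (j : Fin 7) (hj : (j:ℕ) ≠ 0) (i : Fin 7) :
    xv j.castSucc i = if (i:ℕ) = 6 then 1 else ((j:ℕ) - 1 : ℝ)/6 := by
  simp only [xv, Fin.coe_castSucc, if_neg hj]

lemma xv_succ (j : Fin 7) (i : Fin 7) :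
    xv j.succ i = if (i:ℕ) = 6 then 1 else ((j:ℕ) : ℝ)/6 := by
  simp only [xv, Fin.val_succ]
  rw [if_neg (by omega)]
  push_cast
  ring_nf

lemma phrag : I7.PhragmenExec xv dv := by
  refine ⟨?_, ?_, ?_⟩
  · intro i; simp [xv]
  · intro j i
    unfold xv
    split_ifs with h1 h2
    · exact le_rfl
    · norm_num
    · have h : 1 ≤ (j:ℕ) := Nat.one_le_iff_ne_zero.mpr h1
      have h' : (1:ℝ) ≤ ((j:ℕ):ℝ) := by exact_mod_cast h
      have : (0:ℝ) ≤ ((j:ℕ):ℝ) - 1 := by linarith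
      positivity
  · intro j
    by_cases hj : (j:ℕ) = 0
    -- ROUND 0
    · have hj0 : j = 0 := Fin.ext (by simpa using hj)
      subst hj0
      refine ⟨by simp [dv, Cv], ?_, ?_⟩
      · intro _
        refine ⟨{6}, ⟨6, Finset.mem_singleton_self 6⟩, ?_, ?_, ?_, ?_⟩
        · intro i hi
          rw [Finset.mem_singleton] at hi
          subst hi
          simp [dv, Av]
        · intro c hc S' hS' hap
          have hc0 : c = 0 := by simpa [Cv] using hc
          have huniq : ∀ i ∈ S', i = (6:Fin 7) := by
            intro i hi
            have h2 := hap i hi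
            rw [hc0] at h2
            by_contra hne
            have hv : (i:ℕ) ≠ 6 := fun hv => hne (Fin.ext (by simpa using hv))
            simp [Av, hv] at h2
          have : S' = {6} := Finset.eq_singleton_iff_nonempty_unique_mem.mpr ⟨hS', huniq⟩
          subst this
          exact le_rfl
        · intro i hi
          rw [Finset.mem_singleton] at hi
          subst hi
          simp [xv]
        · intro i hi
          rw [Finset.mem_singleton] at hi
          have hv : (i:ℕ) ≠ 6 := fun hv => hi (Fin.ext (by simpa using hv))
          simp [xv, hv]
      · intro h
        exact absurd ⟨0, by simp [Cv], 6, by simp [Av]⟩ h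
    -- ROUNDS 1-6
    · set l : ℝ := ((j:ℕ) - 1 : ℝ)/6 with hl
      have hj1 : 1 ≤ (j:ℕ) := Nat.one_le_iff_ne_zero.mpr hj
      have hj6 : (j:ℕ) ≤ 6 := by omega
      have hjR : (1:ℝ) ≤ ((j:ℕ):ℝ) := by exact_mod_cast hj1
      have hjR6 : ((j:ℕ):ℝ) ≤ 6 := by exact_mod_cast hj6
      have hl0 : 0 ≤ l := by rw [hl]; linarith [div_nonneg (by linarith : (0:ℝ) ≤ ((j:ℕ):ℝ) - 1) (by norm_num : (0:ℝ) ≤ 6)]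
      have hl1 : l ≤ 5/6 := by rw [hl]; rw [div_le_div_iff₀ (by norm_num) (by norm_num)]; linarith
      have happrove : ∀ i ∈ S6, dv j ∈ Av i j := by
        intro i hi
        have hi6 := mem_S6.mp hi
        unfold dv Av
        rw [if_neg hj, if_neg hj]
        by_cases h1 : (j:ℕ) = 1
        · rw [if_pos h1, if_pos h1, if_neg hi6]
          simp
        · rw [if_neg h1, if_neg h1]
          simp
      have hsum : ∑ i ∈ S6, xv j.castSucc i = 6 * l := by
        rw [Finset.sum_congr rfl (fun i _ => xv_castSucc j hj i)]
        exact sumS6 l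
      have hdC : dv j ∈ I7.C j := by
        simp only [I7_C]
        unfold dv Cv
        rw [if_neg hj, if_neg hj]
        by_cases h1 : (j:ℕ) = 1 <;> simp [h1]
      refine ⟨hdC, ?_, ?_⟩
      · intro _
        refine ⟨S6, ⟨0, mem_S6.mpr (by norm_num)⟩, happrove, ?_, ?_, ?_⟩
        · intro c hc S' hS' hap
          rw [hsum, card_S6, Finset.sum_congr rfl (fun i _ => xv_castSucc j hj i)]
          have := phragMin l hl0 hl1 S' hS'
          push_cast
          convert this using 2
        · intro i hi
          have hi6 := mem_S6.mp hi
          rw [xv_succ, if_neg hi6, hsum, card_S6]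
          rw [hl]
          push_cast
          ring
        · intro i hi
          have hv : (i:ℕ) = 6 := by
            by_contra hne
            exact hi (mem_S6.mpr hne)
          rw [xv_succ, xv_castSucc j hj, if_pos hv, if_pos hv]
      · intro h
        exact absurd ⟨dv j, hdC, 0, happrove 0 (mem_S6.mpr (by norm_num))⟩ h


lemma bv0 {j : ℕ} (hj : j ≠ 0) : bv j 6 = 0 := by
  simp [bv, hj]

lemma bvlo {j : ℕ} (hj : j ≠ 0) (hj7 : j ≤ 7) {i : Fin 7} (hi : (i:ℕ) ≠ 6) :
    bv j i = (7 - (j:ℝ))/6 := by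
  have h7 : ((j:ℕ):ℝ) ≤ 7 := by exact_mod_cast hj7
  simp only [bv, if_neg hj, if_neg hi]
  rw [max_eq_right]
  apply div_nonneg (by linarith) (by norm_num)

lemma bv_nonneg : ∀ j i, 0 ≤ bv j i := by
  intro j i
  unfold bv
  split_ifs with h1 h2
  · norm_num
  · exact le_rfl
  · exact le_max_left _ _

lemma mes : I7.MESExec 7 bv dv := by
  refine ⟨le_rfl, ?_, bv_nonneg, ?_, ?_⟩
  · intro i; simp [bv]
  · intro j _
    refine ⟨valid_dv j, ?_⟩
    by_cases hj0 : (j:ℕ) = 0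
    -- ROUND 0
    · have hj : j = 0 := Fin.ext (by simpa using hj0)
      subst hj
      have hA6 : dv 0 ∈ Av 6 0 := by simp [dv, Av]
      have hAn : ∀ i : Fin 7, (i:ℕ) ≠ 6 → dv 0 ∉ Av i 0 := by
        intro i hv
        simp [dv, Av, hv]
      refine ⟨1, by norm_num, ?_, ?_, ?_, ?_⟩
      · unfold Inst.affordable
        rw [Finset.sum_filter]
        simp only [I7_A]
        rw [Fin.sum_univ_seven]
        norm_num [Av, dv, bv]
      · rintro ρ' h0 ⟨c, hc, haff⟩
        have hc0 : c = 0 := by simpa [Cv] using hc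
        subst hc0
        unfold Inst.affordable at haff
        rw [Finset.sum_filter] at haff
        simp only [I7_A] at haff
        rw [Fin.sum_univ_seven] at haff
        norm_num [Av, bv] at haff
        linarith [min_le_right (1:ℝ) ρ', haff]
      · intro i hmem
        have hv : (i:ℕ) = 6 := by
          by_contra hne
          exact hAn i hne hmem
        simp only [val0]
        norm_num [bv, hv]
      · intro i hmem
        have hv : (i:ℕ) ≠ 6 := by
          intro hv
          have : i = 6 := Fin.ext (by simpa using hv)
          rw [this] at hmem
          exact hmem hA6
        simp only [val0]
        norm_num [bv, hv]
    -- ROUNDS 1-6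
    · have hj1 : 1 ≤ (j:ℕ) := Nat.one_le_iff_ne_zero.mpr hj0
      have hj6 : (j:ℕ) ≤ 6 := by omega
      have hjR : (1:ℝ) ≤ ((j:ℕ):ℝ) := by exact_mod_cast hj1
      have hjR6 : ((j:ℕ):ℝ) ≤ 6 := by exact_mod_cast hj6
      have hmem : ∀ i : Fin 7, (i:ℕ) ≠ 6 → dv j ∈ Av i j := by
        intro i hv
        unfold dv Av
        rw [if_neg hj0, if_neg hj0]
        by_cases h1 : (j:ℕ) = 1
        · rw [if_pos h1, if_pos h1, if_neg hv]; simp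
        · rw [if_neg h1, if_neg h1]; simp
      have hbud : ∀ i : Fin 7, (i:ℕ) ≠ 6 → bv (j:ℕ) i = (7 - ((j:ℕ):ℝ))/6 :=
        fun i hv => bvlo hj0 (by omega) hv
      have hblow : (1:ℝ)/6 ≤ (7 - ((j:ℕ):ℝ))/6 := by
        rw [div_le_div_iff₀ (by norm_num) (by norm_num)]
        linarith
      refine ⟨1/6, by norm_num, ?_, ?_, ?_, ?_⟩
      · unfold Inst.affordable
        rw [Finset.sum_filter]
        show _ ≤ ∑ i, @ite ℝ (dv j ∈ Av i j) (@decidableMem (Fin 4) (fun a b => Classical.propDecidable (a = b)) (dv j) (Av i j)) (min (bv (j:ℕ) i) (1 / 6)) 0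
        have h1 : ((7:ℕ):ℝ)/((7:ℕ):ℝ) = ∑ i : Fin 7, (if (i:ℕ) = 6 then (0:ℝ) else 1/6) := by
          rw [Fin.sum_univ_seven]; norm_num
        refine h1.trans_le (Finset.sum_le_sum ?_)
        intro i _
        rcases eq_or_ne ((i:ℕ)) 6 with hv | hv
        · rw [if_pos hv]
          split_ifs with h
          · exact le_min (bv_nonneg _ _) (by norm_num)
          · exact le_rfl
        · rw [if_neg hv, if_pos (hmem i hv), hbud i hv, min_eq_right hblow]
      · rintro ρ' h0 ⟨c, hc, haff⟩
        unfold Inst.affordable at haff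
        simp only [I7_A] at haff
        have pt : ∀ i : Fin 7, min (bv (j:ℕ) i) ρ' ≤ (if (i:ℕ) = 6 then 0 else ρ') := by
          intro i
          rcases eq_or_ne ((i:ℕ)) 6 with hv | hv
          · rw [if_pos hv, show i = 6 from Fin.ext (by simpa using hv), bv0 hj0]
            simp [h0]
          · rw [if_neg hv]
            exact min_le_right _ _
        have hub := haff.trans (Finset.sum_le_sum (fun i _ => pt i))
        have hub2 := hub.trans (Finset.sum_le_sum_of_subset_of_nonneg
          (fun i _ => Finset.mem_univ i) (fun i _ _ => by
            rcases eq_or_ne ((i:ℕ)) 6 with hv | hv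
            · rw [if_pos hv]
            · rw [if_neg hv]; exact h0))
        rw [Fin.sum_univ_seven] at hub2
        norm_num at hub2
        linarith
      · intro i hmem'
        rcases eq_or_ne ((i:ℕ)) 6 with hv | hv
        · rw [show i = 6 from Fin.ext (by simpa using hv), bv0 hj0, bv0 (by omega)]
          norm_num
        · rw [hbud i hv, bvlo (by omega) (by omega) hv]
          push_cast
          rw [max_eq_right (by linarith)]
          ring
      · intro i hmem'
        have hv : (i:ℕ) = 6 := by
          by_contra hne
          exact hmem' (hmem i hne)
        rw [show i = 6 from Fin.ext (by simpa using hv), bv0 hj0, bv0 (by omega)]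
  · intro h
    exact absurd h (lt_irrefl 7)


lemma hsub : ∀ (i : Fin 7) (j : Fin 7), dv j ∈ Av i j → dv' j ∈ Av i j := by
  intro i j h
  unfold dv dv' Av at *
  split_ifs at * <;> simp_all

lemma util_le (i : Fin 7) : I7.util dv i ≤ I7.util dv' i := by
  exact Nat.card_le_card_of_injective
    (fun x => (⟨x.1, hsub i x.1 x.2⟩ : {j : Fin 7 // dv' j ∈ I7.A i j}))
    (fun a b hab => Subtype.ext (by simpa using congrArg Subtype.val hab))

lemma util_lt : I7.util dv 6 < I7.util dv' 6 := by
  have e : ∀ j : Fin 7, (dv j ∈ Av 6 j) ↔ ¬ (j = (1:Fin 7)) := by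
    intro j
    by_cases hj : j = 1
    · subst hj
      simp [dv, Av]
    · have hv : (j:ℕ) ≠ 1 := fun h => hj (Fin.ext (by simpa using h))
      simp only [hj, not_false_iff, iff_true]
      unfold dv Av
      by_cases h0 : (j:ℕ) = 0
      · simp [h0]
      · simp [h0, hv]
  have hall : ∀ j : Fin 7, dv' j ∈ Av 6 j := by
    intro j
    unfold dv' Av
    split_ifs <;> simp_all
  have h1 : I7.util dv 6 = Nat.card {j : Fin 7 // ¬ (j = (1:Fin 7))} :=
    Nat.card_congr (Equiv.subtypeEquivRight e)
  have h2 : I7.util dv' 6 = Nat.card (Fin 7) :=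
    Nat.card_congr (Equiv.subtypeUnivEquiv hall)
  rw [h1, h2]
  rw [Nat.card_eq_fintype_card, Nat.card_eq_fintype_card, Fintype.card_subtype_compl,
    Fintype.card_subtype_eq, Fintype.card_fin]
  norm_num


end NPE


/-- there is a decision instance (with `n = 7` voters and `T = 7` rounds)
on which some decision sequence `D` is simultaneously the output of an execution of
Sequential Phragmén and of an execution of MES that decides all rounds, yet `D` is
Pareto-dominated by another decision sequence; hence neither rule always produces Pareto
efficient outcomes. -/
theorem phragmen_and_mes_not_pareto_efficient :
    ∃ (γ : Type) (I : Inst 7 7 γ) (d : Fin 7 → γ),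
      I.ValidSeq d ∧
      (∃ x : Fin 8 → Fin 7 → ℝ, I.PhragmenExec x d) ∧
      (∃ b : ℕ → Fin 7 → ℝ, I.MESExec 7 b d) ∧
      ∃ d' : Fin 7 → γ, I.ValidSeq d' ∧
        (∀ i, I.util d i ≤ I.util d' i) ∧ (∃ i, I.util d i < I.util d' i) := by
  exact ⟨Fin 4, NPE.I7, NPE.dv, NPE.valid_dv, ⟨NPE.xv, NPE.phrag⟩, ⟨NPE.bv, NPE.mes⟩,
    NPE.dv', NPE.valid_dv', NPE.util_le, ⟨6, NPE.util_lt⟩⟩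
end
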